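/- arXiv:1810.01754 — 2 statements merged into one kernel-verified Lean document; each statement's English description precedes it below -/
import Mathlib

section
/- Let E be a real Hilbert space, ℐ : E → ℝ of C¹-class with ℐ(0) = 0, 𝒥(u) = ½‖u‖² - ℐ(u), and suppose (J1)–(J4) of Theorem 2.1 hold: (J1) there is r > 0 with inf_{‖u‖=r} 𝒥(u) > 0; (J2) there is q ≥ 2 with ℐ(t_n u_n)/t_n^q → ∞ whenever t_n → ∞ and u_n → u ≠ 0; (J3) for u ∈ 𝒩 and t ≠ 1, (t²-1)/2·ℐ'(u)(u) - ℐ(tu) + ℐ(u) < 0; (J4) 𝒥 is coercive on 𝒩. Then inf_𝒩 𝒥 ≥ inf_{‖u‖=r} 𝒥 > 0. -/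
/-!
Along the ray through a point `u` of the sphere `‖u‖ = r`, the fibering map `t ↦ 𝒥(t u)` starts at
`𝒥(0) = 0`, is positive at `t = 1` by (J1), and is negative for large `t` by (J2); its interior
maximum is a critical point, which puts a multiple of `u` on the Nehari manifold `𝒩`, so `𝒩 ≠ ∅`.
Conversely, by (J3) the map `t ↦ 𝒥(t v)` is maximal at `t = 1` for `v ∈ 𝒩`, so `𝒥(v)` dominates the
value at the point `(r / ‖v‖) v` of the sphere.
-/

open Filter Set

lemma nonempty_and_bddBelow_of_sInf_ne_zero {s : Set ℝ} (h : sInf s ≠ 0) :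
    s.Nonempty ∧ BddBelow s := by
  refine ⟨nonempty_iff_ne_empty.2 fun hs => h ?_, not_not.1 fun hs => h ?_⟩
  · rw [hs, Real.sInf_empty]
  · exact Real.sInf_of_not_bddBelow hs

lemma exists_hasDerivAt_eq_zero_of_lt_of_gt {f f' : ℝ → ℝ} {a b c : ℝ} (hc : c ∈ Icc a b)
    (ha : f a < f c) (hb : f b < f c) (hf : ContinuousOn f (Icc a b))
    (hf' : ∀ x ∈ Ioo a b, HasDerivAt f (f' x) x) : ∃ x ∈ Ioo a b, f' x = 0 := by
  obtain ⟨x, hx, hmax⟩ := isCompact_Icc.exists_isMaxOn ⟨c, hc⟩ hf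
  have hxa : a ≠ x := by rintro rfl; exact (hmax hc).not_gt ha
  have hxb : x ≠ b := by rintro rfl; exact (hmax hc).not_gt hb
  have hx' : x ∈ Ioo a b := ⟨lt_of_le_of_ne hx.1 hxa, lt_of_le_of_ne hx.2 hxb⟩
  exact ⟨x, hx', (hmax.isLocalMax (Icc_mem_nhds hx'.1 hx'.2)).hasDerivAt_eq_zero (hf' x hx')⟩

section Nehari

variable {E : Type*} [NormedAddCommGroup E]

noncomputable def energyFunctional (I : E → ℝ) (u : E) : ℝ := 1 / 2 * ‖u‖ ^ 2 - I u

lemma energyFunctional_zero {I : E → ℝ} (hI0 : I 0 = 0) : energyFunctional I 0 = 0 := by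
  simp [energyFunctional, hI0]

variable [NormedSpace ℝ E]

def nehariManifold (I : E → ℝ) : Set E := {u | u ≠ 0 ∧ ‖u‖ ^ 2 = fderiv ℝ I u u}

variable {I : E → ℝ}

lemma norm_smul_sq (t : ℝ) (u : E) : ‖t • u‖ ^ 2 = t ^ 2 * ‖u‖ ^ 2 := by
  rw [norm_smul, mul_pow, Real.norm_eq_abs, sq_abs]

lemma energyFunctional_smul (t : ℝ) (u : E) :
    energyFunctional I (t • u) = 1 / 2 * ‖u‖ ^ 2 * t ^ 2 - I (t • u) := by
  rw [energyFunctional, norm_smul_sq]; ring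

lemma hasDerivAt_energyFunctional_smul {u : E} {t : ℝ} (hI : DifferentiableAt ℝ I (t • u)) :
    HasDerivAt (fun s : ℝ => energyFunctional I (s • u)) (t * ‖u‖ ^ 2 - fderiv ℝ I (t • u) u) t := by
  have hquad := (hasDerivAt_pow 2 t).const_mul (1 / 2 * ‖u‖ ^ 2)
  have hray := hI.hasFDerivAt.comp_hasDerivAt t ((hasDerivAt_id t).smul_const u)
  simp only [id, one_smul] at hray
  exact ((hquad.sub hray).congr_deriv (by push_cast; ring)).congr_of_eventuallyEq
    (Eventually.of_forall fun s => energyFunctional_smul s u)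

lemma smul_mem_nehariManifold_of_fderiv_smul_eq {u : E} {t : ℝ} (hu : u ≠ 0) (ht : t ≠ 0)
    (h : fderiv ℝ I (t • u) u = t * ‖u‖ ^ 2) : t • u ∈ nehariManifold I := by
  refine ⟨smul_ne_zero ht hu, ?_⟩
  rw [norm_smul_sq, map_smul, smul_eq_mul, h]
  ring

lemma exists_one_le_energyFunctional_smul_neg {u : E} {q : ℝ} (hq : 2 ≤ q)
    (hgrowth : Tendsto (fun n : ℕ => I ((n : ℝ) • u) / (n : ℝ) ^ q) atTop atTop) :
    ∃ T : ℝ, 1 ≤ T ∧ energyFunctional I (T • u) < 0 := by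
  obtain ⟨n, hn1, hn⟩ := ((tendsto_natCast_atTop_atTop.eventually_ge_atTop (1 : ℝ)).and
    (hgrowth.eventually_gt_atTop (‖u‖ ^ 2))).exists
  refine ⟨n, hn1, ?_⟩
  have hpow : (n : ℝ) ^ 2 ≤ (n : ℝ) ^ q := by
    simpa only [Real.rpow_two] using Real.rpow_le_rpow_of_exponent_le hn1 hq
  have hI_big : ‖u‖ ^ 2 * (n : ℝ) ^ q < I ((n : ℝ) • u) :=
    (lt_div_iff₀ (by positivity)).1 hn
  have hquad_le := mul_le_mul_of_nonneg_left hpow (sq_nonneg ‖u‖)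
  rw [energyFunctional_smul]
  linarith [show 0 ≤ ‖u‖ ^ 2 * (n : ℝ) ^ 2 by positivity]

lemma exists_smul_mem_nehariManifold (hI : Differentiable ℝ I) (hI0 : I 0 = 0) {u : E} {T : ℝ}
    (hu : 0 < energyFunctional I u) (hT : 1 ≤ T) (hTu : energyFunctional I (T • u) < 0) :
    ∃ t : ℝ, t • u ∈ nehariManifold I := by
  have hu0 : u ≠ 0 := by rintro rfl; exact hu.ne' (energyFunctional_zero hI0)
  have hderiv (t : ℝ) := hasDerivAt_energyFunctional_smul (u := u) (hI (t • u))
  obtain ⟨t, ht, hcrit⟩ := exists_hasDerivAt_eq_zero_of_lt_of_gt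
    (f := fun s => energyFunctional I (s • u)) (c := 1) ⟨zero_le_one, hT⟩ (by simpa [energyFunctional_zero hI0] using hu)
    (by simpa using hTu.trans hu) (fun s _ => (hderiv s).continuousAt.continuousWithinAt)
    (fun s _ => hderiv s)
  exact ⟨t, smul_mem_nehariManifold_of_fderiv_smul_eq hu0 ht.1.ne'
    (sub_eq_zero.1 hcrit).symm⟩

lemma energyFunctional_smul_lt_of_mem_nehariManifold {u : E} (hu : u ∈ nehariManifold I) {t : ℝ}
    (h : (t ^ 2 - 1) / 2 * fderiv ℝ I u u - I (t • u) + I u < 0) :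
    energyFunctional I (t • u) < energyFunctional I u := by
  rw [energyFunctional_smul, energyFunctional, hu.2]
  linarith

lemma sInf_energyFunctional_sphere_le_of_mem_nehariManifold {r : ℝ} (hr : 0 < r)
    (hbdd : BddBelow (energyFunctional I '' Metric.sphere (0 : E) r))
    (hmax : ∀ u ∈ nehariManifold I, ∀ t : ℝ, 0 < t → t ≠ 1 →
      (t ^ 2 - 1) / 2 * fderiv ℝ I u u - I (t • u) + I u < 0)
    {v : E} (hv : v ∈ nehariManifold I) :
    sInf (energyFunctional I '' Metric.sphere (0 : E) r) ≤ energyFunctional I v := by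
  set t := r * ‖v‖⁻¹
  have ht : 0 < t := mul_pos hr (inv_pos.2 (norm_pos_iff.2 hv.1))
  have hsphere : t • v ∈ Metric.sphere (0 : E) r := by
    simpa [t] using norm_smul_inv_norm' (𝕜 := ℝ) hr.le hv.1
  refine (csInf_le hbdd (mem_image_of_mem _ hsphere)).trans ?_
  rcases eq_or_ne t 1 with h1 | h1
  · rw [h1, one_smul]
  · exact (energyFunctional_smul_lt_of_mem_nehariManifold hv (hmax v hv t ht h1)).le

end Nehari

theorem stmt_10_general {E : Type*} [NormedAddCommGroup E] [InnerProductSpace ℝ E]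
    (I : E → ℝ) (hI : ContDiff ℝ 1 I) (hI0 : I 0 = 0)
    (J : E → ℝ) (hJ : ∀ u, J u = (1 / 2) * ‖u‖ ^ 2 - I u)
    (Neh : Set E) (hNeh : Neh = {u : E | u ≠ 0 ∧ ‖u‖ ^ 2 = fderiv ℝ I u u})
    (r : ℝ) (hr : 0 < r)
    (J1 : 0 < sInf (J '' Metric.sphere (0 : E) r))
    (q : ℝ) (hq : 2 ≤ q)
    (J2 : ∀ (t : ℕ → ℝ) (un : ℕ → E) (u : E), Tendsto t atTop atTop →
      Tendsto un atTop (nhds u) → u ≠ 0 →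
      Tendsto (fun n => I (t n • un n) / t n ^ q) atTop atTop)
    (J3 : ∀ u ∈ Neh, ∀ t : ℝ, 0 < t → t ≠ 1 →
      (t ^ 2 - 1) / 2 * fderiv ℝ I u u - I (t • u) + I u < 0) :
    sInf (J '' Metric.sphere (0 : E) r) ≤ sInf (J '' Neh) ∧
      0 < sInf (J '' Metric.sphere (0 : E) r) := by
  obtain rfl : J = energyFunctional I := funext hJ
  obtain rfl : Neh = nehariManifold I := hNeh
  obtain ⟨⟨_, u, hu_sphere, rfl⟩, hbdd⟩ := nonempty_and_bddBelow_of_sInf_ne_zero J1.ne'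
  have hu_pos : 0 < energyFunctional I u := J1.trans_le (csInf_le hbdd (mem_image_of_mem _ hu_sphere))
  have hu : u ≠ 0 := ne_zero_of_mem_sphere hr.ne' ⟨u, hu_sphere⟩
  obtain ⟨T, hT, hTu⟩ := exists_one_le_energyFunctional_smul_neg hq
    (J2 _ _ u tendsto_natCast_atTop_atTop tendsto_const_nhds hu)
  obtain ⟨t, ht⟩ := exists_smul_mem_nehariManifold (hI.differentiable one_ne_zero) hI0 hu_pos hT hTu
  refine ⟨le_csInf ⟨_, mem_image_of_mem _ ht⟩ ?_, J1⟩
  rintro _ ⟨v, hv, rfl⟩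
  exact sInf_energyFunctional_sphere_le_of_mem_nehariManifold hr hbdd J3 hv

theorem stmt_10 {E : Type*} [NormedAddCommGroup E] [InnerProductSpace ℝ E]
    [CompleteSpace E]
    (I : E → ℝ) (hI : ContDiff ℝ 1 I) (hI0 : I 0 = 0)
    (J : E → ℝ) (hJ : ∀ u, J u = (1 / 2) * ‖u‖ ^ 2 - I u)
    (Neh : Set E) (hNeh : Neh = {u : E | u ≠ 0 ∧ ‖u‖ ^ 2 = fderiv ℝ I u u})
    (r : ℝ) (hr : 0 < r)
    (J1 : 0 < sInf (J '' Metric.sphere (0 : E) r))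
    (q : ℝ) (hq : 2 ≤ q)
    (J2 : ∀ (t : ℕ → ℝ) (un : ℕ → E) (u : E), Tendsto t atTop atTop →
      Tendsto un atTop (nhds u) → u ≠ 0 →
      Tendsto (fun n => I (t n • un n) / t n ^ q) atTop atTop)
    (J3 : ∀ u ∈ Neh, ∀ t : ℝ, 0 < t → t ≠ 1 →
      (t ^ 2 - 1) / 2 * fderiv ℝ I u u - I (t • u) + I u < 0)
    (J4 : ∀ un : ℕ → E, (∀ n, un n ∈ Neh) →
      Tendsto (fun n => ‖un n‖) atTop atTop → Tendsto (fun n => J (un n)) atTop atTop) :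
    sInf (J '' Metric.sphere (0 : E) r) ≤ sInf (J '' Neh) ∧
      0 < sInf (J '' Metric.sphere (0 : E) r) :=
  stmt_10_general I hI hI0 J hJ Neh hNeh r hr J1 q hq J2 J3
end

section
/- Let 𝒥 be a C¹ functional on a Hilbert space E with 𝒥(u) = ½‖u‖² - ℐ(u), where ℐ satisfies conditions (J1)–(J4), and let m : S → 𝒩 be the Nehari projection m(u) = t(u)u from the unit sphere S onto the Nehari manifold. Then for v ∈ S and z in the tangent space T_v S, the derivative satisfies (𝒥 ∘ m)'(v)(z) = ‖m(v)‖·𝒥'(m(v))(z); consequently ‖(𝒥 ∘ m)'(v)‖ = ‖m(v)‖·‖𝒥'(m(v))‖. -/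
/-!
By (J3), for `u ∈ 𝒩` the fibre map `s ↦ 𝒥(s u)` on `s > 0` is maximal at `s = 1`, so `m(u)`
maximises `𝒥` on the ray through `u`. Hence near `v`
`𝒥(t(v) u) ≤ 𝒥(m(u)) ≤ 𝒥(m(u)) - 𝒥(t(u) v) + 𝒥(m(v))`,
both bounds agree with `𝒥 ∘ m` at `v`, and both have derivative `t(v) 𝒥'(m(v))` there: the lower
one by the chain rule, the upper one by strict differentiability of `𝒥` at `m(v)` and continuity
of `t`. Continuity of `t` is a compactness argument: (J2) rules out `t(uₙ) → ∞`, `𝒩` is closed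
because (J1) keeps it away from `0`, and uniqueness of `t` identifies every limit point.
-/

open Filter Topology Asymptotics

section

variable {E F : Type*} [NormedAddCommGroup E] [NormedSpace ℝ E]
  [NormedAddCommGroup F] [NormedSpace ℝ F]

theorem HasFDerivAt.of_eventually_le_of_le {f g₁ g₂ : E → ℝ} {L : E →L[ℝ] ℝ} {x : E}
    (h₁ : HasFDerivAt g₁ L x) (h₂ : HasFDerivAt g₂ L x)
    (hle₁ : ∀ᶠ y in 𝓝 x, g₁ y ≤ f y) (hle₂ : ∀ᶠ y in 𝓝 x, f y ≤ g₂ y)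
    (hx₁ : g₁ x = f x) (hx₂ : g₂ x = f x) : HasFDerivAt f L x := by
  refine .of_isLittleO <| IsBigO.trans_isLittleO (.of_norm_eventuallyLE ?_)
    (h₁.isLittleO.norm_left.add h₂.isLittleO.norm_left)
  filter_upwards [hle₁, hle₂] with y hy₁ hy₂
  simp only [Real.norm_eq_abs, abs_le]
  constructor <;> linarith [neg_abs_le (g₁ y - g₁ x - L (y - x)),
    abs_nonneg (g₁ y - g₁ x - L (y - x)), le_abs_self (g₂ y - g₂ x - L (y - x)),
    abs_nonneg (g₂ y - g₂ x - L (y - x))]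

theorem HasStrictFDerivAt.hasFDerivAt_comp_smul_sub_comp_smul {J : E → F} {L : E →L[ℝ] F}
    {t : E → ℝ} {v : E} (hJ : HasStrictFDerivAt J L (t v • v)) (ht : ContinuousAt t v) :
    HasFDerivAt (fun u ↦ J (t u • u) - J (t u • v)) (t v • L) v := by
  have hpair : Tendsto (fun u ↦ (t u • u, t u • v)) (𝓝 v) (𝓝 (t v • v, t v • v)) :=
    (ht.smul continuousAt_id).prodMk_nhds (ht.smul continuousAt_const)
  have hstrict := hJ.isLittleO.comp_tendsto hpair
  have hscale : (fun u ↦ t u • u - t u • v) =O[𝓝 v] fun u ↦ u - v := by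
    simpa only [smul_sub, one_smul] using (ht.isBigO_one ℝ).smul (isBigO_refl (· - v) (𝓝 v))
  have hvary : (fun u ↦ (t u - t v) • L (u - v)) =o[𝓝 v] fun u ↦ u - v := by
    have htend : (fun u ↦ t u - t v) =o[𝓝 v] fun _ ↦ (1 : ℝ) :=
      (isLittleO_one_iff ℝ).2 (tendsto_sub_nhds_zero_iff.2 ht)
    simpa only [one_smul] using htend.smul_isBigO (L.isBigO_comp (· - v) (𝓝 v))
  refine .of_isLittleO <| ((hstrict.trans_isBigO hscale).add hvary).congr_left fun u ↦ ?_
  simp only [Function.comp_apply, smul_apply, ← smul_sub, map_smul, sub_smul, sub_self]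
  abel

theorem HasStrictFDerivAt.hasFDerivAt_comp_smul_of_isMaxOn {J : E → ℝ} {L : E →L[ℝ] ℝ}
    {t : E → ℝ} {v : E} (hJ : HasStrictFDerivAt J L (t v • v)) (ht : ContinuousAt t v)
    (htv : 0 < t v) (hmax : ∀ᶠ u in 𝓝 v, IsMaxOn (fun s ↦ J (s • u)) (Set.Ioi 0) (t u)) :
    HasFDerivAt (fun u ↦ J (t u • u)) (t v • L) v := by
  have hlower : HasFDerivAt (fun u ↦ J (t v • u)) (t v • L) v := by
    refine (hJ.hasFDerivAt.comp v ((hasFDerivAt_id v).const_smul (t v))).congr_fderiv ?_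
    ext; simp
  refine .of_eventually_le_of_le hlower
    ((hJ.hasFDerivAt_comp_smul_sub_comp_smul ht).add_const (J (t v • v))) ?_ ?_ rfl (by simp)
  · filter_upwards [hmax] with u hu using hu (Set.mem_Ioi.2 htv)
  · filter_upwards [ht.eventually_const_lt htv] with u hu
    have : J (t u • v) ≤ J (t v • v) := hmax.self_of_nhds (Set.mem_Ioi.2 hu)
    linarith

end

section Nehari

open Set

variable {E : Type*} [NormedAddCommGroup E] {I J : E → ℝ}

theorem exists_pos_le_norm_of_le {N : Set E} {c : ℝ} (hc : 0 < c) (hN : ∀ u ∈ N, c ≤ J u)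
    (hJ0 : J 0 = 0) (hJ : ContinuousAt J 0) : ∃ δ > 0, ∀ u ∈ N, δ ≤ ‖u‖ := by
  obtain ⟨δ, hδ, hball⟩ := Metric.eventually_nhds_iff.1 (hJ.eventually (gt_mem_nhds (hJ0 ▸ hc)))
  refine ⟨δ, hδ, fun u hu ↦ not_lt.1 fun hlt ↦ ?_⟩
  exact (hN u hu).not_gt (hball (by rwa [dist_zero_right]))

variable [NormedSpace ℝ E]

theorem energy_smul_le_of_nehari (hJ : ∀ u, J u = 1 / 2 * ‖u‖ ^ 2 - I u) {u : E}
    (hu : ‖u‖ ^ 2 = fderiv ℝ I u u)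
    (hfibre : ∀ s : ℝ, 0 < s → s ≠ 1 → (s ^ 2 - 1) / 2 * fderiv ℝ I u u - I (s • u) + I u < 0)
    {s : ℝ} (hs : 0 < s) : J (s • u) ≤ J u := by
  rcases eq_or_ne s 1 with rfl | hs1
  · rw [one_smul]
  · have hdiff : J (s • u) - J u = (s ^ 2 - 1) / 2 * fderiv ℝ I u u - I (s • u) + I u := by
      rw [hJ, hJ, norm_smul, mul_pow, Real.norm_eq_abs, sq_abs, ← hu]
      ring
    linarith [hfibre s hs hs1]

theorem sInf_image_sphere_le {r : ℝ} (hr : 0 < r) (hbdd : BddBelow (J '' Metric.sphere 0 r))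
    {u : E} (hu : u ≠ 0) (hray : ∀ s : ℝ, 0 < s → J (s • u) ≤ J u) :
    sInf (J '' Metric.sphere 0 r) ≤ J u := by
  have hu' : 0 < ‖u‖ := norm_pos_iff.2 hu
  refine (csInf_le hbdd ⟨(r / ‖u‖) • u, ?_, rfl⟩).trans (hray _ (div_pos hr hu'))
  rw [mem_sphere_zero_iff_norm, norm_smul, Real.norm_of_nonneg (div_pos hr hu').le,
    div_mul_cancel₀ _ hu'.ne']

theorem isClosed_nehari (hI : Continuous (fderiv ℝ I)) {δ : ℝ} (hδ : 0 < δ)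
    (hN : ∀ u ∈ {u : E | u ≠ 0 ∧ ‖u‖ ^ 2 = fderiv ℝ I u u}, δ ≤ ‖u‖) :
    IsClosed {u : E | u ≠ 0 ∧ ‖u‖ ^ 2 = fderiv ℝ I u u} := by
  have : {u : E | u ≠ 0 ∧ ‖u‖ ^ 2 = fderiv ℝ I u u} =
      {u | δ ≤ ‖u‖} ∩ {u | ‖u‖ ^ 2 = fderiv ℝ I u u} := by
    ext u
    refine ⟨fun hu ↦ ⟨hN u hu, hu.2⟩, fun hu ↦ ⟨?_, hu.2⟩⟩
    exact norm_pos_iff.1 (hδ.trans_le hu.1)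
  rw [this]
  exact (isClosed_le continuous_const continuous_norm).inter
    (isClosed_eq (continuous_norm.pow 2) (hI.clm_apply continuous_id))

theorem tendsto_energy_smul_atBot (hJ : ∀ u, J u = 1 / 2 * ‖u‖ ^ 2 - I u) {q : ℝ} (hq : 2 ≤ q)
    {s : ℕ → ℝ} {u : ℕ → E} {v : E} (hs : Tendsto s atTop atTop) (hu : Tendsto u atTop (𝓝 v))
    (hI : Tendsto (fun n ↦ I (s n • u n) / s n ^ q) atTop atTop) :
    Tendsto (fun n ↦ J (s n • u n)) atTop atBot := by
  set B := ‖v‖ ^ 2 + 1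
  have hbound : ∀ᶠ n in atTop, ‖u n‖ ^ 2 ≤ B :=
    (hu.norm.pow 2).eventually_le_const (lt_add_one _)
  refine tendsto_atBot_mono' atTop ?_ (tendsto_neg_atTop_atBot.comp hs)
  filter_upwards [hs.eventually_ge_atTop 1, hI.eventually_ge_atTop (B / 2 + 1), hbound]
    with n hs1 hIn hun
  have hpow : s n ≤ s n ^ q := by
    simpa using Real.rpow_le_rpow_of_exponent_le hs1 (by linarith : (1 : ℝ) ≤ q)
  have hsq : s n ^ 2 ≤ s n ^ q := by
    simpa using Real.rpow_le_rpow_of_exponent_le hs1 hq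
  rw [le_div_iff₀ (by positivity)] at hIn
  -- `J (s • u) ≤ s ^ q * B / 2 - (B / 2 + 1) * s ^ q = -s ^ q ≤ -s`
  rw [hJ, norm_smul, mul_pow, Real.norm_eq_abs, sq_abs, Function.comp_apply]
  nlinarith [mul_le_mul hsq hun (sq_nonneg _) (by positivity)]

theorem continuousAt_of_unique_smul_mem {N : Set E} (hN : IsClosed N) (h0 : (0 : E) ∉ N)
    {c : ℝ} (hc : ∀ u ∈ N, c ≤ J u) {t : E → ℝ}
    (ht : ∀ u, u ≠ 0 → 0 < t u ∧ t u • u ∈ N ∧ ∀ s : ℝ, 0 < s → s • u ∈ N → s = t u)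
    {v : E} (hv : v ≠ 0)
    (hblow : ∀ (s : ℕ → ℝ) (u : ℕ → E), Tendsto s atTop atTop → Tendsto u atTop (𝓝 v) →
      Tendsto (fun n ↦ J (s n • u n)) atTop atBot) :
    ContinuousAt t v := by
  refine tendsto_of_subseq_tendsto fun w hw ↦ ?_
  have hw0 : ∀ᶠ n in atTop, w n ≠ 0 := hw.eventually_ne hv
  obtain ⟨M, hM⟩ : ∃ M, ∃ᶠ n in atTop, t (w n) ∈ Icc 0 M := by
    by_contra! hlarge
    have htop : Tendsto (fun n ↦ t (w n)) atTop atTop := tendsto_atTop.2 fun M ↦ by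
      filter_upwards [hlarge M, hw0] with n hn hn0
      by_contra! hlt
      exact hn ⟨(ht _ hn0).1.le, hlt.le⟩
    obtain ⟨n, hn, hn0⟩ :=
      (((hblow _ _ htop hw).eventually (eventually_lt_atBot c)).and hw0).exists
    exact (hc _ (ht _ hn0).2.1).not_gt hn
  obtain ⟨s, hs, φ, hφ, hlim⟩ := tendsto_subseq_of_frequently_bounded (Metric.isBounded_Icc 0 M) hM
  rw [closure_Icc] at hs
  have hsv : s • v ∈ N := hN.mem_of_tendsto (hlim.smul (hw.comp hφ.tendsto_atTop))
    ((hφ.tendsto_atTop.eventually hw0).mono fun n hn ↦ (ht _ hn).2.1)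
  have hs0 : s ≠ 0 := by
    rintro rfl
    exact h0 (by rwa [zero_smul] at hsv)
  exact ⟨φ, (ht v hv).2.2 s (hs.1.lt_of_ne' hs0) hsv ▸ hlim⟩

end Nehari

open RealInnerProductSpace

theorem stmt_11_general {E : Type*} [NormedAddCommGroup E] [InnerProductSpace ℝ E]
    (I : E → ℝ) (hI : ContDiff ℝ 1 I) (hI0 : I 0 = 0)
    (J : E → ℝ) (hJ : ∀ u, J u = (1 / 2) * ‖u‖ ^ 2 - I u)
    (Neh : Set E) (hNeh : Neh = {u : E | u ≠ 0 ∧ ‖u‖ ^ 2 = fderiv ℝ I u u})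
    (r : ℝ) (hr : 0 < r)
    (J1 : 0 < sInf (J '' Metric.sphere (0 : E) r))
    (q : ℝ) (hq : 2 ≤ q)
    (J2 : ∀ (tn : ℕ → ℝ) (un : ℕ → E) (u : E), Tendsto tn atTop atTop →
      Tendsto un atTop (nhds u) → u ≠ 0 →
      Tendsto (fun n => I (tn n • un n) / tn n ^ q) atTop atTop)
    (J3 : ∀ u ∈ Neh, ∀ s : ℝ, 0 < s → s ≠ 1 →
      (s ^ 2 - 1) / 2 * fderiv ℝ I u u - I (s • u) + I u < 0)
    -- the Nehari projection `m(u) = t(u)u`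
    (t : E → ℝ)
    (ht : ∀ u : E, u ≠ 0 → 0 < t u ∧ t u • u ∈ Neh ∧
      ∀ s : ℝ, 0 < s → s • u ∈ Neh → s = t u) :
    ∀ v : E, ‖v‖ = 1 →
      (∀ z : E, ⟪v, z⟫ = 0 →
        fderiv ℝ (J ∘ fun u => t u • u) v z = ‖t v • v‖ * fderiv ℝ J (t v • v) z) ∧
      ‖fderiv ℝ (J ∘ fun u => t u • u) v‖ = ‖t v • v‖ * ‖fderiv ℝ J (t v • v)‖ := by
  subst hNeh
  intro v hv
  have hv0 : v ≠ 0 := norm_ne_zero_iff.1 (hv ▸ one_ne_zero)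
  have htv : 0 < t v := (ht v hv0).1
  have hJC : ContDiff ℝ 1 J := (funext hJ).symm ▸ (contDiff_const.mul (contDiff_norm_sq ℝ)).sub hI
  have hray : ∀ w : E, w ≠ 0 ∧ ‖w‖ ^ 2 = fderiv ℝ I w w → ∀ s : ℝ, 0 < s → J (s • w) ≤ J w :=
    fun w hw _ hs ↦ energy_smul_le_of_nehari hJ hw.2 (J3 w hw) hs
  have hbdd : BddBelow (J '' Metric.sphere 0 r) := by
    by_contra h
    exact J1.ne' (Real.sInf_of_not_bddBelow h)
  have hc : ∀ w : E, w ≠ 0 ∧ ‖w‖ ^ 2 = fderiv ℝ I w w → sInf (J '' Metric.sphere 0 r) ≤ J w :=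
    fun w hw ↦ sInf_image_sphere_le hr hbdd hw.1 (hray w hw)
  obtain ⟨δ, hδ, hδN⟩ :=
    exists_pos_le_norm_of_le J1 hc (by simp [hJ, hI0]) hJC.continuous.continuousAt
  have hcont : ContinuousAt t v :=
    continuousAt_of_unique_smul_mem (isClosed_nehari (hI.continuous_fderiv one_ne_zero) hδ hδN)
      (fun h ↦ h.1 rfl) hc ht hv0 fun s u hs hu ↦
        tendsto_energy_smul_atBot hJ hq hs hu (J2 s u v hs hu hv0)
  have hmax : ∀ u : E, u ≠ 0 → IsMaxOn (fun s ↦ J (s • u)) (Set.Ioi 0) (t u) := fun u hu s hs ↦ by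
    obtain ⟨htu, hmem, -⟩ := ht u hu
    simpa [smul_smul, div_mul_cancel₀ _ htu.ne'] using hray _ hmem (s / t u) (div_pos hs htu)
  have hderiv := (hJC.contDiffAt.hasStrictFDerivAt one_ne_zero).hasFDerivAt_comp_smul_of_isMaxOn
    hcont htv ((eventually_ne_nhds hv0).mono hmax)
  have hnorm : ‖t v • v‖ = t v := by rw [norm_smul, hv, mul_one, Real.norm_of_nonneg htv.le]
  refine ⟨fun z _ ↦ ?_, ?_⟩
  · rw [Function.comp_def, hderiv.fderiv, hnorm]
    rfl
  · rw [Function.comp_def, hderiv.fderiv, hnorm, norm_smul, Real.norm_of_nonneg htv.le]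

theorem stmt_11 {E : Type*} [NormedAddCommGroup E] [InnerProductSpace ℝ E]
    [CompleteSpace E]
    (I : E → ℝ) (hI : ContDiff ℝ 1 I) (hI0 : I 0 = 0)
    (J : E → ℝ) (hJ : ∀ u, J u = (1 / 2) * ‖u‖ ^ 2 - I u)
    (Neh : Set E) (hNeh : Neh = {u : E | u ≠ 0 ∧ ‖u‖ ^ 2 = fderiv ℝ I u u})
    (r : ℝ) (hr : 0 < r)
    (J1 : 0 < sInf (J '' Metric.sphere (0 : E) r))
    (q : ℝ) (hq : 2 ≤ q)
    (J2 : ∀ (tn : ℕ → ℝ) (un : ℕ → E) (u : E), Tendsto tn atTop atTop →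
      Tendsto un atTop (nhds u) → u ≠ 0 →
      Tendsto (fun n => I (tn n • un n) / tn n ^ q) atTop atTop)
    (J3 : ∀ u ∈ Neh, ∀ s : ℝ, 0 < s → s ≠ 1 →
      (s ^ 2 - 1) / 2 * fderiv ℝ I u u - I (s • u) + I u < 0)
    (J4 : ∀ un : ℕ → E, (∀ n, un n ∈ Neh) →
      Tendsto (fun n => ‖un n‖) atTop atTop → Tendsto (fun n => J (un n)) atTop atTop)
    -- the Nehari projection `m(u) = t(u)u`
    (t : E → ℝ)
    (ht : ∀ u : E, u ≠ 0 → 0 < t u ∧ t u • u ∈ Neh ∧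
      ∀ s : ℝ, 0 < s → s • u ∈ Neh → s = t u) :
    ∀ v : E, ‖v‖ = 1 →
      (∀ z : E, ⟪v, z⟫ = 0 →
        fderiv ℝ (J ∘ fun u => t u • u) v z = ‖t v • v‖ * fderiv ℝ J (t v • v) z) ∧
      ‖fderiv ℝ (J ∘ fun u => t u • u) v‖ = ‖t v • v‖ * ‖fderiv ℝ J (t v • v)‖ :=
  stmt_11_general I hI hI0 J hJ Neh hNeh r hr J1 q hq J2 J3 t ht
end
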